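/- For every real number r > 0 and every natural number m ≥ 1, the alternating sum ∑_{i=0}^{m} (-1)^i · [Γ(r+1)/(Γ(i+1)·Γ(r-i+1))] · [Γ(r+m-i)/(Γ(m-i+1)·Γ(r))] equals 0 (while for m = 0 the sum equals 1). Equivalently, the generalized binomial coefficients satisfy ∑_{i=0}^{m} (-1)^i · C(r, i) · C(r+m-i-1, m-i) = δ_{m,0}. -/

import Mathlib

/-!
The two `Γ`-quotients are generalized binomial coefficients: the first is `C(r, i)`, the second is
the multiset coefficient `C(r + k - 1, k) = (-1)^k C(-r, k)` with `k = m - i`. The alternating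
sum is therefore `(-1)^m` times the Chu–Vandermonde convolution
`∑ C(r, i) C(-r, m - i) = C(r + (-r), m) = C(0, m) = δ_{m,0}`.
-/

open Finset Polynomial

namespace Ring

variable {R : Type*} [CommRing R] [BinomialRing R]

theorem multichoose_eq_neg_one_pow_mul_choose_neg (r : R) (n : ℕ) :
    multichoose r n = (-1) ^ n * choose (-r) n := by
  rw [choose_neg', Units.smul_def, zsmul_eq_mul, Int.cast_negOnePow_natCast, ← mul_assoc,
    ← mul_pow, neg_one_mul, neg_neg, one_pow, one_mul]

theorem sum_antidiagonal_neg_one_pow_mul_choose_mul_multichoose (r : R) (m : ℕ) :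
    ∑ ij ∈ antidiagonal m, (-1) ^ ij.1 * choose r ij.1 * multichoose r ij.2 =
      if m = 0 then 1 else 0 := by
  have hsign : ∀ ij ∈ antidiagonal m, (-1) ^ ij.1 * choose r ij.1 * multichoose r ij.2 =
      (-1) ^ m * (choose r ij.1 * choose (-r) ij.2) := by
    intro ij hij
    rw [multichoose_eq_neg_one_pow_mul_choose_neg, ← mem_antidiagonal.mp hij, pow_add]
    ring
  rw [sum_congr rfl hsign, ← mul_sum, ← add_choose_eq m (Commute.all r (-r)), add_neg_cancel,
    choose_zero_ite]
  split_ifs with hm <;> simp [hm]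

end Ring

namespace Real

theorem Gamma_add_nat_eq_ascPochhammer_eval_mul {x : ℝ} (hx : ∀ k : ℕ, x ≠ -k) (n : ℕ) :
    Gamma (x + n) = (ascPochhammer ℝ n).eval x * Gamma x := by
  induction n with
  | zero => simp
  | succ n ih =>
    have hxn : x + n ≠ 0 := fun h => hx n (eq_neg_of_add_eq_zero_left h)
    rw [Nat.cast_succ, ← add_assoc, Gamma_add_one hxn, ih, ascPochhammer_succ_right, eval_mul,
      eval_add, eval_X, eval_natCast]
    ring

theorem Gamma_add_nat_div_eq_multichoose {x : ℝ} (hx : ∀ k : ℕ, x ≠ -k) (n : ℕ) :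
    Gamma (x + n) / (Gamma (n + 1) * Gamma x) = Ring.multichoose x n := by
  have hfact := Ring.factorial_nsmul_multichoose_eq_ascPochhammer x n
  rw [ascPochhammer_smeval_eq_eval, nsmul_eq_mul] at hfact
  have hΓ : Gamma x ≠ 0 := Gamma_ne_zero hx
  rw [Gamma_add_nat_eq_ascPochhammer_eval_mul hx, Gamma_nat_eq_factorial, ← hfact]
  field_simp

theorem Gamma_add_one_div_eq_choose {r : ℝ} (hr : ∀ k : ℕ, r + 1 ≠ -k) (i : ℕ) :
    Gamma (r + 1) / (Gamma (i + 1) * Gamma (r - i + 1)) = Ring.choose r i := by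
  -- At a pole of `Γ (r - i + 1)` Mathlib's `Γ` is `0`, and `r` is then a natural number `< i`.
  by_cases hpole : ∃ n : ℕ, r - i + 1 = -n
  · obtain ⟨n, hn⟩ := hpole
    have hni : n < i := by
      by_contra! hin
      exact hr (n - i) (by push_cast [Nat.cast_sub hin]; linarith)
    have hr_nat : r = ((i - (n + 1) : ℕ) : ℝ) := by
      push_cast [Nat.cast_sub hni]; linarith
    rw [(Gamma_eq_zero_iff _).mpr ⟨n, hn⟩, mul_zero, div_zero, hr_nat, Ring.choose_natCast,
      Nat.choose_eq_zero_of_lt (by omega), Nat.cast_zero]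
  · push Not at hpole
    rw [Ring.choose, ← Gamma_add_nat_div_eq_multichoose hpole,
      show r - i + 1 + i = r + 1 by ring]

end Real

/-- Orthogonality of the fractional-order reduction and accumulation coefficients:
for real `r > 0`, the alternating sum
`∑_{i=0}^{m} (-1)^i · [Γ(r+1)/(Γ(i+1)·Γ(r-i+1))] · [Γ(r+m-i)/(Γ(m-i+1)·Γ(r))]`
equals `1` when `m = 0` and `0` when `m ≥ 1`. -/
theorem fractional_accumulation_reduction_orthogonality
    (r : ℝ) (hr : 0 < r) (m : ℕ) :
    ∑ i ∈ Finset.range (m + 1),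
        (-1 : ℝ) ^ i
          * (Real.Gamma (r + 1) / (Real.Gamma ((i : ℝ) + 1) * Real.Gamma (r - (i : ℝ) + 1)))
          * (Real.Gamma (r + (m : ℝ) - (i : ℝ))
              / (Real.Gamma ((m : ℝ) - (i : ℝ) + 1) * Real.Gamma r))
      = if m = 0 then 1 else 0 := by
  have hr_pole : ∀ k : ℕ, r ≠ -k := fun k h => by linarith [k.cast_nonneg (α := ℝ)]
  have hr1_pole : ∀ k : ℕ, r + 1 ≠ -k := fun k h => by linarith [k.cast_nonneg (α := ℝ)]
  rw [← Ring.sum_antidiagonal_neg_one_pow_mul_choose_mul_multichoose r m,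
    Nat.sum_antidiagonal_eq_sum_range_succ_mk]
  refine sum_congr rfl fun i hi => ?_
  rw [Real.Gamma_add_one_div_eq_choose hr1_pole, ← Real.Gamma_add_nat_div_eq_multichoose hr_pole,
    Nat.cast_sub (mem_range_succ_iff.mp hi), add_sub_assoc]
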